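/- arXiv:1202.3854 — 3 statements merged into one kernel-verified Lean document; each statement's English description precedes it below -/
import Mathlib

section
/- Let n ≥ 1 and 1 ≤ k ≤ n, let U ⊆ ℝⁿ be an open neighborhood of 0, let λ : U → ℝ and ξ₁, …, ξₙ : U → ℝ be C^∞ functions, and write λ^{(m)} for the m-th iterated partial derivative of λ in the k-th coordinate direction (λ^{(0)} = λ). Assume: (H1) λ^{(m)}(0) = 0 for all 0 ≤ m ≤ k−1; (H2) ∂λ^{(m−1)}/∂x_j(0) = 0 for all 1 ≤ m ≤ k and all j with m+1 ≤ j ≤ n; (H3) ∂λ^{(m−1)}/∂x_m(0) ≠ 0 for all 1 ≤ m ≤ k (in particular λ^{(k)}(0) ≠ 0); (H4) ξ_i(0) = 0 for all i ≠ k and ξ_k(0) ≠ 0; (H5) for each 1 ≤ m ≤ k−1 the function Σ_{i=1}^{n} ξ_i · ∂λ^{(m−1)}/∂x_i vanishes identically on S_m := {x ∈ U : λ(x) = λ^{(1)}(x) = ⋯ = λ^{(m−1)}(x) = 0}. Define ζ : U → ℝⁿ by ζ = (ξ₁, …, ξ_{k−1}, λ·ξ_k, ξ_{k+1}, …, ξₙ).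 Then the Jacobian determinant of ζ at 0 equals ξ_k(0)^k · λ^{(k)}(0) · det( (∂ξ_i/∂x_j(0))_{k+1 ≤ i, j ≤ n} ), where the last determinant is interpreted as 1 when k = n. In particular, 0 is a nondegenerate zero of ζ if and only if the matrix (∂ξ_i/∂x_j(0))_{k+1 ≤ i, j ≤ n} is invertible, and in that case the sign of the Jacobian determinant of ζ at 0 equals sgn(ξ_k(0)^k λ^{(k)}(0)) times the sign of det(∂ξ_i/∂x_j(0))_{k+1 ≤ i, j ≤ n}. -/
/-- The partial derivative of `f : ℝⁿ → ℝ` in the `j`-th coordinate direction,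
with `j` a 1-based index (so `1 ≤ j ≤ n` are the meaningful values). -/
noncomputable def pd (n : ℕ) (j : ℕ) (f : (Fin n → ℝ) → ℝ) : (Fin n → ℝ) → ℝ :=
  fun x => fderiv ℝ f x (fun l : Fin n => if (l : ℕ) + 1 = j then 1 else 0)

/-- The `m`-th iterated partial derivative in the `k`-th coordinate direction
(1-based index `k`); `itd n k 0 f = f`. -/
noncomputable def itd (n : ℕ) (k : ℕ) : ℕ → ((Fin n → ℝ) → ℝ) → ((Fin n → ℝ) → ℝ)
  | 0, f => f
  | m + 1, f => pd n k (itd n k m f)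

lemma contDiffOn_pd {n j : ℕ} {U : Set (Fin n → ℝ)} {f} (hU : IsOpen U)
    (hf : ContDiffOn ℝ (⊤ : ℕ∞) f U) : ContDiffOn ℝ (⊤ : ℕ∞) (pd n j f) U := by
  exact (hf.fderiv_of_isOpen hU (by simp)).clm_apply contDiffOn_const

lemma contDiffOn_itd {n k : ℕ} {U : Set (Fin n → ℝ)} {f} (hU : IsOpen U)
    (hf : ContDiffOn ℝ (⊤ : ℕ∞) f U) (m : ℕ) : ContDiffOn ℝ (⊤ : ℕ∞) (itd n k m f) U := by
  induction m with
  | zero => exact hf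
  | succ m ih => exact contDiffOn_pd hU ih

lemma diffAt_of_contDiffOn {n : ℕ} {U : Set (Fin n → ℝ)} {f : (Fin n → ℝ) → ℝ}
    {x : Fin n → ℝ} (hU : IsOpen U)
    (hx : x ∈ U) (hf : ContDiffOn ℝ (⊤ : ℕ∞) f U) : DifferentiableAt ℝ f x :=
  (hf.contDiffAt (hU.mem_nhds hx)).differentiableAt (by simp)

/-- basis vector used in `pd` -/
noncomputable def eb (n j : ℕ) : Fin n → ℝ := fun l : Fin n => if (l : ℕ) + 1 = j then 1 else 0

lemma pd_eq (n j : ℕ) (f : (Fin n → ℝ) → ℝ) (x) : pd n j f x = fderiv ℝ f x (eb n j) := rfl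

lemma eb_single (n : ℕ) (j' : Fin n) : eb n ((j' : ℕ) + 1) = (fun l => if l = j' then 1 else 0) := by
  funext l
  simp only [eb]
  by_cases h : l = j'
  · simp [h]
  · rw [if_neg (fun hc => h (Fin.ext (by omega))), if_neg h]

theorem key_relation
    (n K : ℕ) (hK1 : 1 ≤ K) (hKn : K ≤ n)
    (U : Set (Fin n → ℝ)) (hU : IsOpen U) (h0U : (0 : Fin n → ℝ) ∈ U)
    (lam : (Fin n → ℝ) → ℝ) (ξ : ℕ → (Fin n → ℝ) → ℝ)
    (hlam : ContDiffOn ℝ (⊤ : ℕ∞) lam U)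
    (hξ : ∀ i, 1 ≤ i → i ≤ n → ContDiffOn ℝ (⊤ : ℕ∞) (ξ i) U)
    (H1 : ∀ m, m < K → itd n K m lam 0 = 0)
    (H2 : ∀ m, 1 ≤ m → m ≤ K → ∀ j, m + 1 ≤ j → j ≤ n →
      pd n j (itd n K (m - 1) lam) 0 = 0)
    (H3 : ∀ m, 1 ≤ m → m ≤ K → pd n m (itd n K (m - 1) lam) 0 ≠ 0)
    (H4a : ∀ i, 1 ≤ i → i ≤ n → i ≠ K → ξ i 0 = 0)
    (H5 : ∀ m, 1 ≤ m → m < K → ∀ x ∈ U, (∀ i, i < m → itd n K i lam x = 0) →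
      (∑ i ∈ Finset.Icc 1 n, ξ i x * pd n i (itd n K (m - 1) lam) x) = 0)
    (m : ℕ) (h1m : 1 ≤ m) (hmK : m < K)
    (j : ℕ) (hj1 : m + 1 ≤ j) (hjn : j ≤ n) :
    ξ K 0 * pd n j (itd n K m lam) 0
      + ∑ i ∈ Finset.Icc 1 m, pd n i (itd n K (m - 1) lam) 0 * pd n j (ξ i) 0 = 0 := by
  classical
  -- the map G whose first m components are λ, λ⁽¹⁾, …, λ⁽ᵐ⁻¹⁾ and the rest coordinates
  set G : (Fin n → ℝ) → (Fin n → ℝ) :=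
    fun x i => if (i : ℕ) < m then itd n K (i : ℕ) lam x else x i with hGdef
  -- its derivative at 0 as a continuous linear map
  set D : Fin n → ((Fin n → ℝ) →L[ℝ] ℝ) :=
    fun i => if (i : ℕ) < m then fderiv ℝ (itd n K (i : ℕ) lam) 0
      else ContinuousLinearMap.proj i with hDdef
  set L : (Fin n → ℝ) →L[ℝ] (Fin n → ℝ) := ContinuousLinearMap.pi D with hLdef
  have hG : HasStrictFDerivAt G L 0 := by
    apply hasStrictFDerivAt_pi''
    intro i
    have : (ContinuousLinearMap.proj i).comp L = D i := by
      ext v; rfl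
    rw [this]
    by_cases hi : (i : ℕ) < m
    · have h1 : (fun x => G x i) = itd n K (i : ℕ) lam := by
        funext x; simp [hGdef, hi]
      have h2 : D i = fderiv ℝ (itd n K (i : ℕ) lam) 0 := by simp only [hDdef]; rw [if_pos hi]
      rw [h1, h2]
      exact (((contDiffOn_itd hU hlam (i : ℕ)).contDiffAt (hU.mem_nhds h0U)).hasStrictFDerivAt
        (by simp))
    · have h1 : (fun x => G x i) = fun x : Fin n → ℝ => x i := by
        funext x; simp [hGdef, hi]
      have h2 : D i = ContinuousLinearMap.proj (R := ℝ) (φ := fun _ : Fin n => ℝ) i := by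
        simp only [hDdef]; rw [if_neg hi]
      rw [h1, h2]
      exact (ContinuousLinearMap.proj (R := ℝ) (φ := fun _ : Fin n => ℝ) i).hasStrictFDerivAt
  -- G has an invertible derivative at 0
  have hMentry : ∀ i j' : Fin n, LinearMap.toMatrix' (L : (Fin n → ℝ) →ₗ[ℝ] (Fin n → ℝ)) i j' =
      if (i : ℕ) < m then pd n ((j' : ℕ) + 1) (itd n K (i : ℕ) lam) 0
      else (if j' = i then 1 else 0) := by
    intro i j'
    rw [LinearMap.toMatrix'_apply]
    rw [show (Pi.single j' (1:ℝ) : Fin n → ℝ) = fun l => if l = j' then 1 else 0 from by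
      funext l; simp [Pi.single_apply]]
    have hv : (fun l => if l = j' then (1:ℝ) else 0) = eb n ((j' : ℕ) + 1) :=
      (eb_single n j').symm
    by_cases hi : (i : ℕ) < m
    · rw [if_pos hi]
      have : (L : (Fin n → ℝ) →ₗ[ℝ] (Fin n → ℝ)) (fun l => if l = j' then 1 else 0) i
          = D i (fun l => if l = j' then 1 else 0) := rfl
      rw [this, hDdef]
      simp only [if_pos hi]
      rw [hv, pd_eq]
    · rw [if_neg hi]
      have : (L : (Fin n → ℝ) →ₗ[ℝ] (Fin n → ℝ)) (fun l => if l = j' then 1 else 0) i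
          = D i (fun l => if l = j' then 1 else 0) := rfl
      rw [this, hDdef]
      simp only [if_neg hi]
      simp [ContinuousLinearMap.proj_apply, eq_comm]
  have hdet : L.det ≠ 0 := by
    have htri : (LinearMap.toMatrix' (L : (Fin n → ℝ) →ₗ[ℝ] (Fin n → ℝ))).BlockTriangular
        OrderDual.toDual := by
      intro i j' hij
      have hij' : i < j' := hij
      rw [hMentry i j']
      by_cases hi : (i : ℕ) < m
      · rw [if_pos hi]
        have h2 := H2 ((i : ℕ) + 1) (by omega) (by omega) ((j' : ℕ) + 1) (by
          have : (i : ℕ) < (j' : ℕ) := hij'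
          omega) (by omega)
        simpa using h2
      · rw [if_neg hi, if_neg (by exact fun hc => absurd hc (ne_of_gt hij'))]
    have hdiag : ∀ i : Fin n,
        LinearMap.toMatrix' (L : (Fin n → ℝ) →ₗ[ℝ] (Fin n → ℝ)) i i ≠ 0 := by
      intro i
      rw [hMentry i i]
      by_cases hi : (i : ℕ) < m
      · rw [if_pos hi]
        have h3 := H3 ((i : ℕ) + 1) (by omega) (by omega)
        simpa using h3
      · rw [if_neg hi, if_pos rfl]; exact one_ne_zero
    have : (LinearMap.toMatrix' (L : (Fin n → ℝ) →ₗ[ℝ] (Fin n → ℝ))).det ≠ 0 := by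
      rw [Matrix.det_of_lowerTriangular _ htri]
      exact Finset.prod_ne_zero_iff.2 fun i _ => hdiag i
    rwa [LinearMap.det_toMatrix'] at this
  set CLE := L.toContinuousLinearEquivOfDetNeZero hdet with hCLE
  have hG' : HasStrictFDerivAt G (CLE : (Fin n → ℝ) →L[ℝ] (Fin n → ℝ)) 0 := by
    rwa [hCLE, ContinuousLinearMap.coe_toContinuousLinearEquivOfDetNeZero]
  have hG0 : G 0 = 0 := by
    funext i
    simp only [hGdef]
    by_cases hi : (i : ℕ) < m
    · rw [if_pos hi]; exact H1 (i : ℕ) (by omega)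
    · simp [hi]
  -- the local inverse of G
  set g := hG'.localInverse G _ 0 with hgdef
  have hg0 : g 0 = 0 := by
    have := hG'.localInverse_apply_image
    rwa [hG0] at this
  -- L fixes the basis vector e_j
  have hLe : L (eb n j) = eb n j := by
    funext i
    have hLi : L (eb n j) i = D i (eb n j) := rfl
    rw [hLi, hDdef]
    by_cases hi : (i : ℕ) < m
    · simp only [if_pos hi]
      have h2 := H2 ((i : ℕ) + 1) (by omega) (by omega) j (by omega) hjn
      have hpd : fderiv ℝ (itd n K (i : ℕ) lam) 0 (eb n j) = pd n j (itd n K (i : ℕ) lam) 0 :=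
        (pd_eq n j _ 0).symm
      rw [hpd]
      have : pd n j (itd n K (i : ℕ) lam) 0 = 0 := by simpa using h2
      rw [this, eb]
      rw [if_neg (by omega)]
    · simp only [if_neg hi]
      rfl
  have hCes : CLE.symm (eb n j) = eb n j := by
    have hCe : CLE (eb n j) = eb n j := by
      rw [hCLE, ContinuousLinearMap.toContinuousLinearEquivOfDetNeZero_apply]
      exact hLe
    rw [ContinuousLinearEquiv.symm_apply_eq]
    exact hCe.symm
  -- the curve γ
  set γ : ℝ → (Fin n → ℝ) := fun t => g (t • eb n j) with hγdef
  have hγ : HasDerivAt γ (eb n j) 0 := by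
    have hsm : HasDerivAt (fun t : ℝ => t • eb n j) (eb n j) 0 := by
      simpa using (hasDerivAt_id (0 : ℝ)).smul_const (eb n j)
    have hginv : HasStrictFDerivAt g
        (CLE.symm : (Fin n → ℝ) →L[ℝ] (Fin n → ℝ)) 0 := by
      have := hG'.to_localInverse
      rwa [hG0] at this
    have hpt : (0 : ℝ) • eb n j = (0 : Fin n → ℝ) := zero_smul _ _
    have hginv' : HasFDerivAt g (CLE.symm : (Fin n → ℝ) →L[ℝ] (Fin n → ℝ))
        ((fun t : ℝ => t • eb n j) 0) := by
      simpa [hpt] using hginv.hasFDerivAt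
    have hcγ := hginv'.comp_hasDerivAt 0 hsm
    exact hcγ.congr_deriv hCes
  have hγ0 : γ 0 = 0 := by
    simp only [hγdef]
    rw [zero_smul]
    exact hg0
  -- eventual properties of the curve
  have htend : Filter.Tendsto (fun t : ℝ => t • eb n j) (nhds 0) (nhds (0 : Fin n → ℝ)) := by
    have hc : Continuous (fun t : ℝ => t • eb n j) := continuous_id.smul continuous_const
    have := hc.tendsto 0
    rwa [zero_smul] at this
  have hri : ∀ᶠ y in nhds (0 : Fin n → ℝ), G (g y) = y := by
    have := hG'.eventually_right_inverse
    rwa [hG0] at this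
  have hev1 : ∀ᶠ t in nhds (0 : ℝ), G (γ t) = t • eb n j := htend.eventually hri
  have hev2 : ∀ᶠ t in nhds (0 : ℝ), γ t ∈ U :=
    hγ.continuousAt.eventually_mem (by rw [hγ0]; exact hU.mem_nhds h0U)
  -- the function F from (H5)
  set μ : ℕ → (Fin n → ℝ) → ℝ := fun i => pd n i (itd n K (m - 1) lam) with hμdef
  have hμC : ∀ i, ContDiffOn ℝ (⊤ : ℕ∞) (μ i) U := fun i => contDiffOn_pd hU (contDiffOn_itd hU hlam _)
  set F : (Fin n → ℝ) → ℝ := fun x => ∑ i ∈ Finset.Icc 1 n, ξ i x * μ i x with hFdef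
  have hev3 : ∀ᶠ t in nhds (0 : ℝ), F (γ t) = 0 := by
    filter_upwards [hev1, hev2] with t h1 h2
    refine H5 m h1m hmK (γ t) h2 fun i hi => ?_
    have hiK : i < n := by omega
    have h1i := congrFun h1 (⟨i, hiK⟩ : Fin n)
    have hL : G (γ t) (⟨i, hiK⟩ : Fin n) = itd n K i lam (γ t) := by
      simp only [hGdef]
      rw [if_pos (by simpa using hi)]
    have hR : (t • eb n j) (⟨i, hiK⟩ : Fin n) = 0 := by
      have : eb n j (⟨i, hiK⟩ : Fin n) = 0 := by
        rw [eb, if_neg (by simp; omega)]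
      simp [this]
    rw [hL, hR] at h1i
    exact h1i
  -- derivative of F at 0
  have hFd : HasFDerivAt F
      (∑ i ∈ Finset.Icc 1 n, (ξ i 0 • fderiv ℝ (μ i) 0 + μ i 0 • fderiv ℝ (ξ i) 0)) 0 := by
    apply HasFDerivAt.fun_sum
    intro i hi
    obtain ⟨hi1, hi2⟩ := Finset.mem_Icc.1 hi
    exact ((diffAt_of_contDiffOn hU h0U (hξ i hi1 hi2)).hasFDerivAt).mul
      ((diffAt_of_contDiffOn hU h0U (hμC i)).hasFDerivAt)
  -- chain rule along the curve
  have hchain : HasDerivAt (F ∘ γ)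
      ((∑ i ∈ Finset.Icc 1 n, (ξ i 0 • fderiv ℝ (μ i) 0 + μ i 0 • fderiv ℝ (ξ i) 0))
        (eb n j)) 0 := by
    have hFd' : HasFDerivAt F
        (∑ i ∈ Finset.Icc 1 n, (ξ i 0 • fderiv ℝ (μ i) 0 + μ i 0 • fderiv ℝ (ξ i) 0)) (γ 0) := by
      rwa [hγ0]
    exact hFd'.comp_hasDerivAt 0 hγ
  have hconst : HasDerivAt (F ∘ γ) 0 0 := by
    refine (hasDerivAt_const (0 : ℝ) (0 : ℝ)).congr_of_eventuallyEq ?_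
    filter_upwards [hev3] with t ht
    simpa using ht
  have hkey : (∑ i ∈ Finset.Icc 1 n,
      (ξ i 0 • fderiv ℝ (μ i) 0 + μ i 0 • fderiv ℝ (ξ i) 0)) (eb n j) = 0 :=
    hchain.unique hconst
  -- expand the linear map applications
  have hkey2 : (∑ i ∈ Finset.Icc 1 n,
      (ξ i 0 * pd n j (μ i) 0 + μ i 0 * pd n j (ξ i) 0)) = 0 := by
    rw [← hkey, ContinuousLinearMap.sum_apply]
    refine Finset.sum_congr rfl fun i _ => ?_
    rw [ContinuousLinearMap.add_apply, ContinuousLinearMap.smul_apply,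
      ContinuousLinearMap.smul_apply, pd_eq, pd_eq]
    rfl
  rw [Finset.sum_add_distrib] at hkey2
  -- first sum: only the term i = K survives
  have hsum1 : (∑ i ∈ Finset.Icc 1 n, ξ i 0 * pd n j (μ i) 0)
      = ξ K 0 * pd n j (μ K) 0 := by
    refine Finset.sum_eq_single_of_mem K (Finset.mem_Icc.2 ⟨hK1, hKn⟩) fun i hi hne => ?_
    obtain ⟨hi1, hi2⟩ := Finset.mem_Icc.1 hi
    rw [H4a i hi1 hi2 hne, zero_mul]
  -- μ K = λ⁽ᵐ⁾
  have hμK : pd n j (μ K) 0 = pd n j (itd n K m lam) 0 := by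
    obtain ⟨m', rfl⟩ : ∃ m', m = m' + 1 := ⟨m - 1, (Nat.succ_pred_eq_of_pos h1m).symm⟩
    simp only [hμdef, Nat.add_sub_cancel]
    rfl
  -- second sum: restrict to Icc 1 m
  have hsum2 : (∑ i ∈ Finset.Icc 1 n, μ i 0 * pd n j (ξ i) 0)
      = ∑ i ∈ Finset.Icc 1 m, μ i 0 * pd n j (ξ i) 0 := by
    symm
    refine Finset.sum_subset (Finset.Icc_subset_Icc_right (by omega)) fun i hi hni => ?_
    obtain ⟨hi1, hi2⟩ := Finset.mem_Icc.1 hi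
    have him : m + 1 ≤ i := by
      rcases Finset.mem_Icc.not.1 hni with h
      omega
    simp only [hμdef]
    rw [H2 m h1m (le_of_lt hmK) i him hi2, zero_mul]
  rw [hsum1, hsum2, hμK] at hkey2
  exact hkey2

theorem xi_pd_eq
    (n K : ℕ) (hK1 : 1 ≤ K) (hKn : K ≤ n)
    (U : Set (Fin n → ℝ)) (hU : IsOpen U) (h0U : (0 : Fin n → ℝ) ∈ U)
    (lam : (Fin n → ℝ) → ℝ) (ξ : ℕ → (Fin n → ℝ) → ℝ)
    (hlam : ContDiffOn ℝ (⊤ : ℕ∞) lam U)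
    (hξ : ∀ i, 1 ≤ i → i ≤ n → ContDiffOn ℝ (⊤ : ℕ∞) (ξ i) U)
    (H1 : ∀ m, m < K → itd n K m lam 0 = 0)
    (H2 : ∀ m, 1 ≤ m → m ≤ K → ∀ j, m + 1 ≤ j → j ≤ n →
      pd n j (itd n K (m - 1) lam) 0 = 0)
    (H3 : ∀ m, 1 ≤ m → m ≤ K → pd n m (itd n K (m - 1) lam) 0 ≠ 0)
    (H4a : ∀ i, 1 ≤ i → i ≤ n → i ≠ K → ξ i 0 = 0)
    (H5 : ∀ m, 1 ≤ m → m < K → ∀ x ∈ U, (∀ i, i < m → itd n K i lam x = 0) →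
      (∑ i ∈ Finset.Icc 1 n, ξ i x * pd n i (itd n K (m - 1) lam) x) = 0) :
    ∀ m, 1 ≤ m → m < K → ∀ j, m + 1 ≤ j → j ≤ n →
    pd n j (ξ m) 0
      = -(ξ K 0 * pd n j (itd n K m lam) 0) / pd n m (itd n K (m - 1) lam) 0 := by
  intro m
  induction m using Nat.strong_induction_on with
  | _ m ih =>
    intro h1m hmK j hj1 hjn
    have hkr := key_relation n K hK1 hKn U hU h0U lam ξ hlam hξ H1 H2 H3 H4a H5
      m h1m hmK j hj1 hjn
    obtain ⟨m', rfl⟩ : ∃ m', m = m' + 1 := ⟨m - 1, (Nat.succ_pred_eq_of_pos h1m).symm⟩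
    rw [Finset.sum_Icc_succ_top (by omega)] at hkr
    have hvan : (∑ i ∈ Finset.Icc 1 m', pd n i (itd n K (m' + 1 - 1) lam) 0 * pd n j (ξ i) 0)
        = 0 := by
      refine Finset.sum_eq_zero fun i hi => ?_
      obtain ⟨hi1, hi2⟩ := Finset.mem_Icc.1 hi
      have hiK : i < K := by omega
      have hpd0 : pd n j (itd n K i lam) 0 = 0 := by
        have := H2 (i + 1) (by omega) (by omega) j (by omega) hjn
        simpa using this
      rw [ih i (by omega) hi1 hiK j (by omega) hjn, hpd0]
      simp
    rw [hvan, zero_add] at hkr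
    have hd : pd n (m' + 1) (itd n K (m' + 1 - 1) lam) 0 ≠ 0 := H3 (m' + 1) (by omega) (by omega)
    simp only [Nat.add_sub_cancel] at hkr hd ⊢
    rw [eq_div_iff hd]
    linarith [hkr]

lemma pd_mul {n j : ℕ} {U : Set (Fin n → ℝ)} {f g : (Fin n → ℝ) → ℝ} {x : Fin n → ℝ}
    (hU : IsOpen U) (hx : x ∈ U) (hf : ContDiffOn ℝ (⊤ : ℕ∞) f U) (hg : ContDiffOn ℝ (⊤ : ℕ∞) g U) :
    pd n j (fun y => f y * g y) x = f x * pd n j g x + g x * pd n j f x := by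
  have h := ((diffAt_of_contDiffOn hU hx hf).hasFDerivAt).fun_mul
    ((diffAt_of_contDiffOn hU hx hg).hasFDerivAt)
  rw [pd_eq, h.fderiv]
  simp [pd_eq]

lemma real_sign_mul (a b : ℝ) (ha : a ≠ 0) (hb : b ≠ 0) :
    Real.sign (a * b) = Real.sign a * Real.sign b := by
  rcases ha.lt_or_gt with h1 | h1 <;> rcases hb.lt_or_gt with h2 | h2
  · rw [Real.sign_of_neg h1, Real.sign_of_neg h2, Real.sign_of_pos (mul_pos_of_neg_of_neg h1 h2)]
    norm_num
  · rw [Real.sign_of_neg h1, Real.sign_of_pos h2,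
      Real.sign_of_neg (mul_neg_of_neg_of_pos h1 h2)]
    norm_num
  · rw [Real.sign_of_pos h1, Real.sign_of_neg h2,
      Real.sign_of_neg (mul_neg_of_pos_of_neg h1 h2)]
    norm_num
  · rw [Real.sign_of_pos h1, Real.sign_of_pos h2, Real.sign_of_pos (mul_pos h1 h2)]
    norm_num

/-- local form of Theorem 5.1: the Jacobian determinant of
`ζ = (ξ₁, …, ξ_{K-1}, λ·ξ_K, ξ_{K+1}, …, ξₙ)` at `0` equals
`ξ_K(0)^K · λ^{(K)}(0) · det((∂ξ_i/∂x_j(0))_{K+1 ≤ i,j ≤ n})`;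
in particular `0` is a nondegenerate zero of `ζ` iff the lower-right block of
first derivatives of the `ξ_i` is invertible, and in that case the sign of the
Jacobian determinant is `sgn(ξ_K(0)^K λ^{(K)}(0))` times the sign of the block
determinant.  All indices are 1-based, matching the paper. -/
theorem jacobian_at_Ak_point
    (n K : ℕ) (hn : 1 ≤ n) (hK1 : 1 ≤ K) (hKn : K ≤ n)
    (U : Set (Fin n → ℝ)) (hU : IsOpen U) (h0U : (0 : Fin n → ℝ) ∈ U)
    (lam : (Fin n → ℝ) → ℝ) (ξ : ℕ → (Fin n → ℝ) → ℝ)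
    (hlam : ContDiffOn ℝ (⊤ : ℕ∞) lam U)
    (hξ : ∀ i, 1 ≤ i → i ≤ n → ContDiffOn ℝ (⊤ : ℕ∞) (ξ i) U)
    -- (H1) λ^{(m)}(0) = 0 for 0 ≤ m ≤ K-1
    (H1 : ∀ m, m < K → itd n K m lam 0 = 0)
    -- (H2) ∂λ^{(m-1)}/∂x_j(0) = 0 for 1 ≤ m ≤ K and m+1 ≤ j ≤ n
    (H2 : ∀ m, 1 ≤ m → m ≤ K → ∀ j, m + 1 ≤ j → j ≤ n →
      pd n j (itd n K (m - 1) lam) 0 = 0)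
    -- (H3) ∂λ^{(m-1)}/∂x_m(0) ≠ 0 for 1 ≤ m ≤ K
    (H3 : ∀ m, 1 ≤ m → m ≤ K → pd n m (itd n K (m - 1) lam) 0 ≠ 0)
    -- (H4) ξ_i(0) = 0 for i ≠ K, and ξ_K(0) ≠ 0
    (H4a : ∀ i, 1 ≤ i → i ≤ n → i ≠ K → ξ i 0 = 0)
    (H4b : ξ K 0 ≠ 0)
    -- (H5) Σ_i ξ_i ∂λ^{(m-1)}/∂x_i vanishes on S_m for 1 ≤ m ≤ K-1
    (H5 : ∀ m, 1 ≤ m → m < K → ∀ x ∈ U, (∀ i, i < m → itd n K i lam x = 0) →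
      (∑ i ∈ Finset.Icc 1 n, ξ i x * pd n i (itd n K (m - 1) lam) x) = 0) :
    -- the components of ζ (1-based index)
    let ζ : ℕ → (Fin n → ℝ) → ℝ :=
      fun i => if i = K then (fun x => lam x * ξ K x) else ξ i
    -- Jacobian matrix of ζ at 0
    let J : Matrix (Fin n) (Fin n) ℝ :=
      Matrix.of fun i j => pd n ((j : ℕ) + 1) (ζ ((i : ℕ) + 1)) 0
    -- lower-right block (∂ξ_i/∂x_j(0))_{K+1 ≤ i,j ≤ n}
    let B : Matrix (Fin (n - K)) (Fin (n - K)) ℝ :=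
      Matrix.of fun a b => pd n (K + (b : ℕ) + 1) (ξ (K + (a : ℕ) + 1)) 0
    J.det = ξ K 0 ^ K * itd n K K lam 0 * B.det ∧
    (J.det ≠ 0 ↔ B.det ≠ 0) ∧
    (B.det ≠ 0 →
      Real.sign J.det = Real.sign (ξ K 0 ^ K * itd n K K lam 0) * Real.sign B.det) := by
  classical
  intro ζ J B
  -- basic values
  have hlam0 : lam 0 = 0 := H1 0 hK1
  have hζK : ζ K = fun x => lam x * ξ K x := by simp only [ζ, if_pos rfl]
  have hζm : ∀ m, m ≠ K → ζ m = ξ m := fun m hm => by simp only [ζ, if_neg hm]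
  -- row K of the Jacobian
  have hrowK : ∀ jc : ℕ, pd n jc (ζ K) 0 = ξ K 0 * pd n jc lam 0 := by
    intro jc
    rw [hζK, pd_mul hU h0U hlam (hξ K hK1 hKn), hlam0, zero_mul, zero_add]
  have hrowKzero : ∀ jc : ℕ, 2 ≤ jc → jc ≤ n → pd n jc (ζ K) 0 = 0 := by
    intro jc h2 hn'
    rw [hrowK jc]
    have hz : pd n jc lam 0 = 0 := H2 1 le_rfl hK1 jc h2 hn'
    rw [hz, mul_zero]
  -- rows 1 ≤ m < K of the Jacobian
  have hsup := xi_pd_eq n K hK1 hKn U hU h0U lam ξ hlam hξ H1 H2 H3 H4a H5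
  have hrowm_zero : ∀ m, 1 ≤ m → m < K → ∀ jc, m + 2 ≤ jc → jc ≤ n →
      pd n jc (ξ m) 0 = 0 := by
    intro m h1m hmK jc hjc hjn
    rw [hsup m h1m hmK jc (by omega) hjn]
    have : pd n jc (itd n K m lam) 0 = 0 := by
      have := H2 (m + 1) (by omega) (by omega) jc (by omega) hjn
      simpa using this
    rw [this]
    simp
  -- the nonzero scalar
  have hDK : itd n K K lam 0 = pd n K (itd n K (K - 1) lam) 0 := by
    obtain ⟨K', rfl⟩ : ∃ K', K = K' + 1 := ⟨K - 1, (Nat.succ_pred_eq_of_pos hK1).symm⟩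
    simp only [Nat.add_sub_cancel]
    rfl
  have hcne : ξ K 0 ^ K * itd n K K lam 0 ≠ 0 :=
    mul_ne_zero (pow_ne_zero _ H4b) (hDK ▸ H3 K hK1 le_rfl)
  -- block decomposition
  have hKnK : K + (n - K) = n := Nat.add_sub_cancel' hKn
  set eqv : Fin K ⊕ Fin (n - K) ≃ Fin n := finSumFinEquiv.trans (finCongr hKnK) with heqv
  have he1 : ∀ a : Fin K, ((eqv (Sum.inl a)) : ℕ) = (a : ℕ) := by
    intro a; simp [heqv]
  have he2 : ∀ b : Fin (n - K), ((eqv (Sum.inr b)) : ℕ) = K + (b : ℕ) := by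
    intro b; simp [heqv]
  set A : Matrix (Fin K) (Fin K) ℝ :=
    Matrix.of (fun a b => J (eqv (Sum.inl a)) (eqv (Sum.inl b))) with hA
  set C : Matrix (Fin (n - K)) (Fin K) ℝ :=
    Matrix.of (fun a b => J (eqv (Sum.inr a)) (eqv (Sum.inl b))) with hC
  have hblocks : J.submatrix eqv eqv = Matrix.fromBlocks A 0 C B := by
    ext i j
    rcases i with a | a <;> rcases j with b | b
    · rfl
    · -- upper-right block is zero
      show J (eqv (Sum.inl a)) (eqv (Sum.inr b)) = 0
      have hJe : J (eqv (Sum.inl a)) (eqv (Sum.inr b))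
          = pd n (K + (b : ℕ) + 1) (ζ ((a : ℕ) + 1)) 0 := by
        show pd n (((eqv (Sum.inr b)) : ℕ) + 1) (ζ (((eqv (Sum.inl a)) : ℕ) + 1)) 0 = _
        rw [he1, he2]
      rw [hJe]
      have hbn : K + (b : ℕ) + 1 ≤ n := by
        have := b.isLt; omega
      by_cases ha : (a : ℕ) + 1 = K
      · rw [ha]
        exact hrowKzero _ (by omega) hbn
      · rw [hζm _ ha]
        exact hrowm_zero ((a : ℕ) + 1) (by omega) (by have := a.isLt; omega) _ (by omega) hbn
    · rfl
    · -- lower-right block is B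
      show J (eqv (Sum.inr a)) (eqv (Sum.inr b)) = B a b
      have hJe : J (eqv (Sum.inr a)) (eqv (Sum.inr b))
          = pd n (K + (b : ℕ) + 1) (ζ (K + (a : ℕ) + 1)) 0 := by
        show pd n (((eqv (Sum.inr b)) : ℕ) + 1) (ζ (((eqv (Sum.inr a)) : ℕ) + 1)) 0 = _
        rw [he2, he2]
      rw [hJe, hζm _ (by omega)]
      rfl
  have hJAB : J.det = A.det * B.det := by
    rw [← Matrix.det_submatrix_equiv_self eqv J, hblocks, Matrix.det_fromBlocks_zero₁₂]
  have hAdet : A.det = ξ K 0 ^ K * itd n K K lam 0 := by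
    have hAentry : ∀ a b : Fin K, A a b = pd n ((b : ℕ) + 1) (ζ ((a : ℕ) + 1)) 0 := by
      intro a b
      show pd n (((eqv (Sum.inl b)) : ℕ) + 1) (ζ (((eqv (Sum.inl a)) : ℕ) + 1)) 0 = _
      rw [he1, he1]
    obtain ⟨K', rfl⟩ : ∃ K', K = K' + 1 := ⟨K - 1, (Nat.succ_pred_eq_of_pos hK1).symm⟩
    set σ : Equiv.Perm (Fin (K' + 1)) := Fin.cycleRange (Fin.last K') with hσ
    set A' : Matrix (Fin (K' + 1)) (Fin (K' + 1)) ℝ := A.submatrix σ.symm id with hA'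
    have hσ0 : σ.symm 0 = Fin.last K' := Fin.cycleRange_symm_zero _
    have hσs : ∀ i' : Fin K', σ.symm i'.succ = i'.castSucc := fun i' => by
      rw [hσ, Fin.cycleRange_symm_succ, Fin.succAbove_last]
    -- A' is lower triangular
    have htriA : A'.BlockTriangular OrderDual.toDual := by
      intro i j hij
      have hij' : i < j := hij
      have hjn : (j : ℕ) + 1 ≤ n := by have := j.isLt; omega
      induction i using Fin.cases with
      | zero =>
        rw [hA', Matrix.submatrix_apply, hσ0, id, hAentry, Fin.val_last]
        have h0j : (0 : ℕ) < (j : ℕ) := by have := Fin.lt_def.mp hij'; rwa [Fin.val_zero] at this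
        exact hrowKzero _ (by omega) hjn
      | succ i' =>
        rw [hA', Matrix.submatrix_apply, hσs, id, hAentry]
        have hvi : ((i'.castSucc : Fin (K' + 1)) : ℕ) = (i' : ℕ) := rfl
        rw [hvi, hζm ((i' : ℕ) + 1) (by have := i'.isLt; omega)]
        have hlt : (i' : ℕ) + 1 < (j : ℕ) := by simpa [Fin.lt_def] using hij'
        exact hrowm_zero ((i' : ℕ) + 1) (by omega) (by have := i'.isLt; omega)
          _ (by omega) hjn
    have hdetA' : A'.det = ∏ i, A' i i := Matrix.det_of_lowerTriangular A' htriA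
    -- the diagonal entries
    have hd0 : A' 0 0 = ξ (K' + 1) 0 * pd n 1 lam 0 := by
      rw [hA', Matrix.submatrix_apply, hσ0, id, hAentry]
      simp only [Fin.val_last, Fin.val_zero]
      exact hrowK 1
    have hds : ∀ i : Fin K', A' i.succ i.succ
        = -(ξ (K' + 1) 0 * pd n ((i : ℕ) + 2) (itd n (K' + 1) ((i : ℕ) + 1) lam) 0)
          / pd n ((i : ℕ) + 1) (itd n (K' + 1) (i : ℕ) lam) 0 := by
      intro i
      rw [hA', Matrix.submatrix_apply, hσs, id, hAentry]
      have hvi : ((i.castSucc : Fin (K' + 1)) : ℕ) = (i : ℕ) := rfl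
      have hvs : ((i.succ : Fin (K' + 1)) : ℕ) = (i : ℕ) + 1 := rfl
      rw [hvi, hvs, hζm _ (by have := i.isLt; omega)]
      have h := hsup ((i : ℕ) + 1) (by omega) (by have := i.isLt; omega)
        ((i : ℕ) + 2) (by omega) (by have := i.isLt; omega)
      simpa using h
    -- telescoping product
    have hDne : ∀ r, 1 ≤ r → r ≤ K' + 1 → pd n r (itd n (K' + 1) (r - 1) lam) 0 ≠ 0 :=
      fun r h1 h2 => H3 r h1 h2
    have htel : ∀ k, k ≤ K' →
        (∏ i ∈ Finset.range k,
          (-(ξ (K' + 1) 0 * pd n (i + 2) (itd n (K' + 1) (i + 1) lam) 0)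
            / pd n (i + 1) (itd n (K' + 1) i lam) 0))
        = (-(ξ (K' + 1) 0)) ^ k * pd n (k + 1) (itd n (K' + 1) k lam) 0
          / pd n 1 lam 0 := by
      intro k
      induction k with
      | zero =>
        intro _
        have h1 := hDne 1 le_rfl (by omega)
        simp only [Finset.range_zero, Finset.prod_empty, pow_zero, one_mul]
        rw [eq_div_iff (by simpa [itd] using h1)]
        simp [itd]
      | succ k ihk =>
        intro hk
        rw [Finset.prod_range_succ, ihk (by omega)]
        have h1 := hDne 1 le_rfl (by omega)
        have hk1 : pd n (k + 1) (itd n (K' + 1) k lam) 0 ≠ 0 := by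
          have := hDne (k + 1) (by omega) (by omega)
          simpa using this
        have h1' : pd n 1 lam 0 ≠ 0 := by simpa [itd] using h1
        field_simp
        ring
    -- put everything together
    have hprod : (∏ i : Fin K', A' i.succ i.succ)
        = (-(ξ (K' + 1) 0)) ^ K' * pd n (K' + 1) (itd n (K' + 1) K' lam) 0
          / pd n 1 lam 0 := by
      calc (∏ i : Fin K', A' i.succ i.succ)
          = ∏ i : Fin K',
              (-(ξ (K' + 1) 0 * pd n ((i : ℕ) + 2) (itd n (K' + 1) ((i : ℕ) + 1) lam) 0)
                / pd n ((i : ℕ) + 1) (itd n (K' + 1) (i : ℕ) lam) 0) :=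
            Finset.prod_congr rfl fun i _ => hds i
        _ = ∏ i ∈ Finset.range K',
              (-(ξ (K' + 1) 0 * pd n (i + 2) (itd n (K' + 1) (i + 1) lam) 0)
                / pd n (i + 1) (itd n (K' + 1) i lam) 0) :=
            Fin.prod_univ_eq_prod_range (fun i =>
              -(ξ (K' + 1) 0 * pd n (i + 2) (itd n (K' + 1) (i + 1) lam) 0)
                / pd n (i + 1) (itd n (K' + 1) i lam) 0) K'
        _ = _ := htel K' le_rfl
    have hdetA'2 : A'.det = (ξ (K' + 1) 0 * pd n 1 lam 0) *
        ((-(ξ (K' + 1) 0)) ^ K' * pd n (K' + 1) (itd n (K' + 1) K' lam) 0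
          / pd n 1 lam 0) := by
      rw [hdetA', Fin.prod_univ_succ, hd0, hprod]
    have hperm : A'.det = ((Equiv.Perm.sign σ.symm : ℤ) : ℝ) * A.det := by
      rw [hA']
      exact_mod_cast Matrix.det_permute σ.symm A
    have hsign : ((Equiv.Perm.sign σ.symm : ℤ) : ℝ) = (-1 : ℝ) ^ K' := by
      rw [Equiv.Perm.sign_symm, hσ, Fin.sign_cycleRange, Fin.val_last]
      push_cast
      ring
    have h1' : pd n 1 lam 0 ≠ 0 := by
      have := H3 1 le_rfl (by omega)
      simpa [itd] using this
    have hneg1 : (-1 : ℝ) ^ K' * (-1 : ℝ) ^ K' = 1 := by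
      rw [← pow_add]
      exact Even.neg_one_pow ⟨K', rfl⟩
    have hAA' : A.det = (-1 : ℝ) ^ K' * A'.det := by
      rw [hperm, hsign, ← mul_assoc, hneg1, one_mul]
    have hitd : itd n (K' + 1) (K' + 1) lam 0 = pd n (K' + 1) (itd n (K' + 1) K' lam) 0 := rfl
    rw [hAA', hdetA'2, hitd,
      show (-(ξ (K' + 1) 0)) ^ K' = (-1 : ℝ) ^ K' * ξ (K' + 1) 0 ^ K' from neg_pow _ _]
    calc (-1 : ℝ) ^ K' * ((ξ (K' + 1) 0 * pd n 1 lam 0) *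
          (((-1 : ℝ) ^ K' * ξ (K' + 1) 0 ^ K') * pd n (K' + 1) (itd n (K' + 1) K' lam) 0
            / pd n 1 lam 0))
        = ((-1 : ℝ) ^ K' * (-1 : ℝ) ^ K') * ((ξ (K' + 1) 0 * ξ (K' + 1) 0 ^ K') *
            ((pd n 1 lam 0 / pd n 1 lam 0) * pd n (K' + 1) (itd n (K' + 1) K' lam) 0)) := by
          ring
      _ = ξ (K' + 1) 0 ^ (K' + 1) * pd n (K' + 1) (itd n (K' + 1) K' lam) 0 := by
          rw [hneg1, div_self h1', one_mul, one_mul, ← pow_succ']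

  refine ⟨by rw [hJAB, hAdet], ?_, ?_⟩
  · rw [hJAB, hAdet]
    constructor
    · intro h hB; exact h (by rw [hB, mul_zero])
    · intro h; exact mul_ne_zero hcne h
  · intro hB
    rw [hJAB, hAdet, real_sign_mul _ _ hcne hB]
end

section
/- Let n ≥ 1 and 1 ≤ k ≤ n, let U ⊆ ℝⁿ be an open neighborhood of 0, let λ : U → ℝ and ξ₁, …, ξₙ : U → ℝ be C^∞ functions, and write λ^{(m)} for the m-th iterated partial derivative of λ in the k-th coordinate direction (λ^{(0)} = λ). Assume: (H1) λ^{(m)}(0) = 0 for all 0 ≤ m ≤ k−1; (H2) ∂λ^{(m−1)}/∂x_j(0) = 0 for all 1 ≤ m ≤ k and all j with m+1 ≤ j ≤ n; (H3) ∂λ^{(m−1)}/∂x_m(0) ≠ 0 for all 1 ≤ m ≤ k; (H4) ξ_i(0) = 0 for all i ≠ k and ξ_k(0) ≠ 0; (H5) for each 1 ≤ m ≤ k−1 the function Σ_{i=1}^{n} ξ_i · ∂λ^{(m−1)}/∂x_i vanishes identically on S_m := {x ∈ U : λ(x) = λ^{(1)}(x) = ⋯ = λ^{(m−1)}(x) =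 0}. Then for each m = 1, …, k−1 one has ∂ξ_m/∂x_j(0) = 0 for every j ≥ m+2, and ∂ξ_m/∂x_{m+1}(0) = − ξ_k(0) · (∂λ^{(m)}/∂x_{m+1}(0)) / (∂λ^{(m−1)}/∂x_m(0)). -/
open scoped ContDiff
open Filter

namespace DerivInduction

/-- the direction vector used in `pd`. -/
def ev (n j : ℕ) : Fin n → ℝ := fun l => if (l : ℕ) + 1 = j then 1 else 0

lemma pd_def {n : ℕ} (j : ℕ) (f : (Fin n → ℝ) → ℝ) (x : Fin n → ℝ) :
    pd n j f x = fderiv ℝ f x (ev n j) := rfl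

lemma itd_succ (n k m : ℕ) (f : (Fin n → ℝ) → ℝ) :
    itd n k (m + 1) f = pd n k (itd n k m f) := rfl

lemma one_le_infty : (1 : WithTop ℕ∞) ≤ ∞ := by
  exact_mod_cast (le_top : (1 : ℕ∞) ≤ ⊤)

lemma contDiffOn_pd {n : ℕ} {U : Set (Fin n → ℝ)} (hU : IsOpen U) (j : ℕ)
    {f : (Fin n → ℝ) → ℝ} (hf : ContDiffOn ℝ ∞ f U) : ContDiffOn ℝ ∞ (pd n j f) U := by
  have h1 : ContDiffOn ℝ ∞ (fderiv ℝ f) U :=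
    hf.fderiv_of_isOpen hU (le_of_eq (show (∞ : WithTop ℕ∞) + 1 = ∞ from rfl))
  exact h1.clm_apply contDiffOn_const

lemma contDiffOn_itd {n : ℕ} {U : Set (Fin n → ℝ)} (hU : IsOpen U) (k : ℕ)
    {f : (Fin n → ℝ) → ℝ} (hf : ContDiffOn ℝ ∞ f U) (m : ℕ) :
    ContDiffOn ℝ ∞ (itd n k m f) U := by
  induction m with
  | zero => exact hf
  | succ m ih => exact contDiffOn_pd hU k ih

/-- A continuous linear functional on `ℝⁿ` is determined by its values on the basis. -/
lemma clm_apply_eq_sum {n : ℕ} (f : (Fin n → ℝ) →L[ℝ] ℝ) (v : Fin n → ℝ) :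
    f v = ∑ l : Fin n, v l * f (ev n ((l : ℕ) + 1)) := by
  conv_lhs => rw [pi_eq_sum_univ v, map_sum]
  refine Finset.sum_congr rfl fun l _ => ?_
  rw [map_smul, smul_eq_mul]
  congr 2
  funext j
  by_cases h : l = j
  · subst h; simp [ev]
  · have h' : ¬((j : ℕ) + 1 = (l : ℕ) + 1) := fun hh =>
      h (Fin.val_injective (by omega)).symm
    simp [ev, h, h']; exact fun hh => h (Fin.ext hh.symm)

/-- The `j`-th partial derivative of `f` equals `fderiv` applied to the `j`-th
basis vector; restated for the basis vector indexed by `l : Fin n`. -/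
lemma fderiv_ev (n : ℕ) (f : (Fin n → ℝ) → ℝ) (x : Fin n → ℝ) (j : ℕ) :
    fderiv ℝ f x (ev n j) = pd n j f x := rfl

noncomputable def Tmap (n K m : ℕ) (lam : (Fin n → ℝ) → ℝ) :
    (Fin n → ℝ) →L[ℝ] (Fin n → ℝ) :=
  ContinuousLinearMap.pi fun i : Fin n =>
    if (i : ℕ) < m then fderiv ℝ (itd n K (i : ℕ) lam) 0 else ContinuousLinearMap.proj i

noncomputable def Hmap (n K m : ℕ) (lam : (Fin n → ℝ) → ℝ) : (Fin n → ℝ) → (Fin n → ℝ) :=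
  fun x i => if (i : ℕ) < m then itd n K (i : ℕ) lam x else x i

/-- The master identity: for `1 ≤ m < K` and `m+1 ≤ j ≤ n`,
`∑_{i=1}^m (∂λ^{(m-1)}/∂x_i)(0) · (∂ξ_i/∂x_j)(0) + ξ_K(0) · (∂λ^{(m)}/∂x_j)(0) = 0`. -/
lemma master
    (n K : ℕ) (hKn : K ≤ n)
    (U : Set (Fin n → ℝ)) (hU : IsOpen U) (h0U : (0 : Fin n → ℝ) ∈ U)
    (lam : (Fin n → ℝ) → ℝ) (ξ : ℕ → (Fin n → ℝ) → ℝ)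
    (hlam : ContDiffOn ℝ ∞ lam U)
    (hξ : ∀ i, 1 ≤ i → i ≤ n → ContDiffOn ℝ ∞ (ξ i) U)
    (H1 : ∀ m, m < K → itd n K m lam 0 = 0)
    (H2 : ∀ m, 1 ≤ m → m ≤ K → ∀ j, m + 1 ≤ j → j ≤ n →
      pd n j (itd n K (m - 1) lam) 0 = 0)
    (H3 : ∀ m, 1 ≤ m → m ≤ K → pd n m (itd n K (m - 1) lam) 0 ≠ 0)
    (H4a : ∀ i, 1 ≤ i → i ≤ n → i ≠ K → ξ i 0 = 0)
    (H5 : ∀ m, 1 ≤ m → m < K → ∀ x ∈ U, (∀ i, i < m → itd n K i lam x = 0) →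
      (∑ i ∈ Finset.Icc 1 n, ξ i x * pd n i (itd n K (m - 1) lam) x) = 0)
    (m : ℕ) (hm1 : 1 ≤ m) (hmK : m < K)
    (j : ℕ) (hj1 : m + 1 ≤ j) (hjn : j ≤ n) :
    (∑ i ∈ Finset.Ioc 0 m, pd n i (itd n K (m - 1) lam) 0 * pd n j (ξ i) 0)
      + ξ K 0 * pd n j (itd n K m lam) 0 = 0 := by
  have h0nhds : U ∈ nhds (0 : Fin n → ℝ) := hU.mem_nhds h0U
  have hitd : ∀ p : ℕ, ContDiffOn ℝ ∞ (itd n K p lam) U := contDiffOn_itd hU K hlam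
  have hg : ∀ i : ℕ, ContDiffOn ℝ ∞ (pd n i (itd n K (m - 1) lam)) U :=
    fun i => contDiffOn_pd hU i (hitd (m - 1))
  set F : (Fin n → ℝ) → ℝ :=
    fun x => ∑ i ∈ Finset.Icc 1 n, ξ i x * pd n i (itd n K (m - 1) lam) x with hFdef
  have hF : ContDiffOn ℝ ∞ F U := by
    refine ContDiffOn.sum fun i hi => ?_
    rcases Finset.mem_Icc.mp hi with ⟨hi1, hin⟩
    exact (hξ i hi1 hin).mul (hg i)
  -- Step 1: pd n j F 0 = 0, via the inverse function theorem.
  have step1 : pd n j F 0 = 0 := by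
    set T := Tmap n K m lam with hTdef
    set Hm := Hmap n K m lam with hHdef
    -- H has strict derivative T at 0
    have hT : HasStrictFDerivAt Hm T 0 := by
      apply hasStrictFDerivAt_pi''
      intro i
      have hproj : (ContinuousLinearMap.proj i).comp T =
          (if (i : ℕ) < m then fderiv ℝ (itd n K (i : ℕ) lam) 0
            else ContinuousLinearMap.proj i) := by
        ext v
        simp [hTdef, Tmap]
      rw [hproj]
      by_cases hi : (i : ℕ) < m
      · rw [if_pos hi]
        have hfun : (fun x => Hm x i) = itd n K (i : ℕ) lam := by
          funext x; simp [hHdef, Hmap, hi]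
        rw [hfun]
        exact ((hitd (i : ℕ)).contDiffAt h0nhds).hasStrictFDerivAt (by simp)
      · rw [if_neg hi]
        have hfun : (fun x => Hm x i) = fun x : Fin n → ℝ => x i := by
          funext x; simp [hHdef, Hmap, hi]
        rw [hfun]
        exact hasStrictFDerivAt_apply i 0
    -- T is injective
    have hker : ∀ v : Fin n → ℝ, T v = 0 → v = 0 := by
      intro v hv
      have key : ∀ p : ℕ, ∀ i : Fin n, (i : ℕ) = p → v i = 0 := by
        intro p
        induction p using Nat.strong_induction_on with
        | _ p IH =>
          intro i hip
          by_cases hi : (i : ℕ) < m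
          · have hrow : fderiv ℝ (itd n K (i : ℕ) lam) 0 v = 0 := by
              have h := congrFun hv i
              simpa [hTdef, Tmap, hi] using h
            rw [clm_apply_eq_sum] at hrow
            have hred : ∀ l : Fin n, l ∈ Finset.univ → l ≠ i →
                v l * fderiv ℝ (itd n K (i : ℕ) lam) 0 (ev n ((l : ℕ) + 1)) = 0 := by
              intro l _ hli
              have hvl : (l : ℕ) ≠ (i : ℕ) := fun h => hli (Fin.val_injective h)
              rcases lt_or_gt_of_ne hvl with hlt | hgt
              · have : v l = 0 := IH (l : ℕ) (by omega) l rfl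
                rw [this, zero_mul]
              · have h2 : fderiv ℝ (itd n K (i : ℕ) lam) 0 (ev n ((l : ℕ) + 1)) = 0 := by
                  have := H2 ((i : ℕ) + 1) (by omega) (by omega) ((l : ℕ) + 1)
                    (by omega) (by omega)
                  simpa [fderiv_ev] using this
                rw [h2, mul_zero]
            rw [Finset.sum_eq_single_of_mem i (Finset.mem_univ i) hred] at hrow
            have h3 : fderiv ℝ (itd n K (i : ℕ) lam) 0 (ev n ((i : ℕ) + 1)) ≠ 0 := by
              have := H3 ((i : ℕ) + 1) (by omega) (by omega)
              simpa [fderiv_ev] using this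
            exact (mul_eq_zero.mp hrow).resolve_right h3
          · have h := congrFun hv i
            simpa [hTdef, Tmap, hi] using h
      funext i
      exact key (i : ℕ) i rfl
    have hinj : Function.Injective T := by
      intro v w h
      have h0 : T (v - w) = 0 := by rw [map_sub, h, sub_self]
      exact sub_eq_zero.mp (hker _ h0)
    have hsurj : Function.Surjective (T.toLinearMap) :=
      LinearMap.injective_iff_surjective.mp hinj
    set eL : (Fin n → ℝ) ≃ₗ[ℝ] (Fin n → ℝ) :=
      LinearEquiv.ofBijective T.toLinearMap ⟨hinj, hsurj⟩ with heLdef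
    set eC : (Fin n → ℝ) ≃L[ℝ] (Fin n → ℝ) := eL.toContinuousLinearEquiv with heCdef
    have hTe : (eC : (Fin n → ℝ) →L[ℝ] (Fin n → ℝ)) = T := by
      ext v : 1
      rfl
    have hH' : HasStrictFDerivAt Hm (eC : (Fin n → ℝ) →L[ℝ] (Fin n → ℝ)) 0 := by
      rw [hTe]; exact hT
    have hH0 : Hm 0 = 0 := by
      funext i
      by_cases hi : (i : ℕ) < m
      · simpa [hHdef, Hmap, hi] using H1 (i : ℕ) (by omega)
      · simp [hHdef, Hmap, hi]
    set ψ := hH'.localInverse Hm eC 0 with hψdef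
    have hψ0 : ψ 0 = 0 := by
      have := hH'.localInverse_apply_image
      rwa [hH0] at this
    have hψd : HasStrictFDerivAt ψ
        ((eC.symm : (Fin n → ℝ) →L[ℝ] (Fin n → ℝ))) 0 := by
      have := hH'.to_localInverse
      rwa [hH0] at this
    have hre : ∀ᶠ y in nhds (0 : Fin n → ℝ), Hm (ψ y) = y := by
      have := hH'.eventually_right_inverse
      rwa [hH0] at this
    -- The curve γ t = ψ (t • e_j)
    set γ : ℝ → (Fin n → ℝ) := fun t => ψ (t • ev n j) with hγdef
    have hc0 : Tendsto (fun t : ℝ => t • ev n j) (nhds 0) (nhds (0 : Fin n → ℝ)) := by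
      have hco : Continuous fun t : ℝ => t • ev n j := continuous_id.smul continuous_const
      have := hco.tendsto 0
      rwa [zero_smul] at this
    have hγ0 : γ 0 = 0 := by simp [hγdef, hψ0]
    have hγc : Tendsto γ (nhds (0 : ℝ)) (nhds (0 : Fin n → ℝ)) := by
      have h1 : Tendsto ψ (nhds (0 : Fin n → ℝ)) (nhds (0 : Fin n → ℝ)) := by
        have := hψd.continuousAt.tendsto
        rwa [hψ0] at this
      exact h1.comp hc0
    have hγU : ∀ᶠ t in nhds (0 : ℝ), γ t ∈ U := hγc h0nhds
    have hHγ : ∀ᶠ t in nhds (0 : ℝ), Hm (γ t) = t • ev n j := hc0.eventually hre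
    have hSz : ∀ᶠ t in nhds (0 : ℝ), ∀ i', i' < m → itd n K i' lam (γ t) = 0 := by
      refine hHγ.mono fun t ht => ?_
      intro i' hi'
      have hi'n : i' < n := by omega
      have h := congrFun ht (⟨i', hi'n⟩ : Fin n)
      have hne : ¬(i' + 1 = j) := by omega
      simpa [hHdef, Hmap, hi', ev, hne] using h
    have hFγ : (fun t => F (γ t)) =ᶠ[nhds (0 : ℝ)] fun _ => 0 := by
      filter_upwards [hγU, hSz] with t h1 h2
      exact H5 m hm1 hmK (γ t) h1 h2
    -- compute derivatives
    have hFd : HasFDerivAt F (fderiv ℝ F 0) 0 :=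
      ((hF.contDiffAt h0nhds).differentiableAt (by simp)).hasFDerivAt
    have hsm : HasDerivAt (fun t : ℝ => t • ev n j) (ev n j) 0 := by
      simpa using (hasDerivAt_id (0 : ℝ)).smul_const (ev n j)
    have hγd : HasDerivAt γ (eC.symm (ev n j)) 0 := by
      have hψd' : HasFDerivAt ψ ((eC.symm : (Fin n → ℝ) →L[ℝ] (Fin n → ℝ)))
          ((0 : ℝ) • ev n j) := by
        rw [zero_smul]; exact hψd.hasFDerivAt
      exact hψd'.comp_hasDerivAt 0 hsm
    -- eC.symm (ev n j) = ev n j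
    have hTev : T (ev n j) = ev n j := by
      funext i
      have : T (ev n j) i =
          (if (i : ℕ) < m then fderiv ℝ (itd n K (i : ℕ) lam) 0
            else ContinuousLinearMap.proj i) (ev n j) := by
        simp [hTdef, Tmap]
      rw [this]
      by_cases hi : (i : ℕ) < m
      · rw [if_pos hi]
        have h2 : fderiv ℝ (itd n K (i : ℕ) lam) 0 (ev n j) = 0 := by
          have := H2 ((i : ℕ) + 1) (by omega) (by omega) j (by omega) hjn
          simpa [fderiv_ev] using this
        rw [h2]
        have hne : ¬((i : ℕ) + 1 = j) := by omega
        simp [ev, hne]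
      · rw [if_neg hi]
        rfl
    have hsymm : eC.symm (ev n j) = ev n j := by
      rw [ContinuousLinearEquiv.symm_apply_eq]
      have : eC (ev n j) = (eC : (Fin n → ℝ) →L[ℝ] (Fin n → ℝ)) (ev n j) := rfl
      rw [this, hTe, hTev]
    have hd1 : HasDerivAt (fun t => F (γ t)) (fderiv ℝ F 0 (eC.symm (ev n j))) 0 := by
      have hFd' : HasFDerivAt F (fderiv ℝ F 0) (γ 0) := by rw [hγ0]; exact hFd
      exact hFd'.comp_hasDerivAt 0 hγd
    have hd2 : HasDerivAt (fun t => F (γ t)) 0 0 :=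
      (hasDerivAt_const (0 : ℝ) (0 : ℝ)).congr_of_eventuallyEq hFγ
    have := hd1.unique hd2
    rw [hsymm] at this
    exact this
  -- Step 2: expand pd n j F 0 by the product rule.
  have hdξ : ∀ i ∈ Finset.Icc 1 n, DifferentiableAt ℝ (ξ i) 0 := by
    intro i hi
    rcases Finset.mem_Icc.mp hi with ⟨hi1, hin⟩
    exact ((hξ i hi1 hin).contDiffAt h0nhds).differentiableAt (by simp)
  have hdg : ∀ i : ℕ, DifferentiableAt ℝ (pd n i (itd n K (m - 1) lam)) 0 :=
    fun i => (((hg i).contDiffAt h0nhds)).differentiableAt (by simp)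
  have hexp : pd n j F 0 = ∑ i ∈ Finset.Icc 1 n,
      (ξ i 0 * pd n j (pd n i (itd n K (m - 1) lam)) 0
        + pd n i (itd n K (m - 1) lam) 0 * pd n j (ξ i) 0) := by
    rw [pd_def, hFdef]
    rw [fderiv_fun_sum (A := fun i x => ξ i x * pd n i (itd n K (m - 1) lam) x) (fun i hi => (hdξ i hi).mul (hdg i))]
    rw [ContinuousLinearMap.sum_apply]
    refine Finset.sum_congr rfl fun i hi => ?_
    rw [fderiv_fun_mul (hdξ i hi) (hdg i)]
    rw [ContinuousLinearMap.add_apply, ContinuousLinearMap.smul_apply,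
      ContinuousLinearMap.smul_apply, smul_eq_mul, smul_eq_mul]
    rfl
  -- Step 3: simplify the sum.
  have hicc : Finset.Icc 1 n = Finset.Ioc 0 n := Finset.Icc_succ_left_eq_Ioc 0 n
  have hsplit : (∑ i ∈ Finset.Ioc 0 m,
        (ξ i 0 * pd n j (pd n i (itd n K (m - 1) lam)) 0
          + pd n i (itd n K (m - 1) lam) 0 * pd n j (ξ i) 0))
      + (∑ i ∈ Finset.Ioc m n,
        (ξ i 0 * pd n j (pd n i (itd n K (m - 1) lam)) 0
          + pd n i (itd n K (m - 1) lam) 0 * pd n j (ξ i) 0))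
      = ∑ i ∈ Finset.Ioc 0 n,
        (ξ i 0 * pd n j (pd n i (itd n K (m - 1) lam)) 0
          + pd n i (itd n K (m - 1) lam) 0 * pd n j (ξ i) 0) :=
    Finset.sum_Ioc_consecutive _ (Nat.zero_le m) (by omega)
  have hitdm : pd n K (itd n K (m - 1) lam) = itd n K m lam := by
    conv_rhs => rw [show m = (m - 1) + 1 by omega]
    exact (DerivInduction.itd_succ n K (m - 1) lam).symm
  have hlow : (∑ i ∈ Finset.Ioc 0 m,
      (ξ i 0 * pd n j (pd n i (itd n K (m - 1) lam)) 0
        + pd n i (itd n K (m - 1) lam) 0 * pd n j (ξ i) 0))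
      = ∑ i ∈ Finset.Ioc 0 m, pd n i (itd n K (m - 1) lam) 0 * pd n j (ξ i) 0 := by
    refine Finset.sum_congr rfl fun i hi => ?_
    rcases Finset.mem_Ioc.mp hi with ⟨hi1, him⟩
    have : ξ i 0 = 0 := H4a i (by omega) (by omega) (by omega)
    rw [this, zero_mul, zero_add]
  have hhigh : (∑ i ∈ Finset.Ioc m n,
      (ξ i 0 * pd n j (pd n i (itd n K (m - 1) lam)) 0
        + pd n i (itd n K (m - 1) lam) 0 * pd n j (ξ i) 0))
      = ξ K 0 * pd n j (itd n K m lam) 0 := by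
    rw [Finset.sum_eq_single_of_mem K (Finset.mem_Ioc.mpr ⟨hmK, hKn⟩)]
    · have hgK : pd n K (itd n K (m - 1) lam) 0 = 0 := by
        rw [hitdm]; exact H1 m hmK
      rw [hgK, zero_mul, add_zero, hitdm]
    · intro i hi hne
      rcases Finset.mem_Ioc.mp hi with ⟨him, hin⟩
      have h1 : ξ i 0 = 0 := H4a i (by omega) hin hne
      have h2 : pd n i (itd n K (m - 1) lam) 0 = 0 := H2 m hm1 (by omega) i (by omega) hin
      rw [h1, h2, zero_mul, zero_mul, add_zero]
  rw [hexp, hicc, ← hsplit, hlow, hhigh] at step1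
  exact step1

end DerivInduction

/-- the inductive derivative computation (5.5) in the proof of
Theorem 5.1: under hypotheses (H1)–(H5), for each `m = 1, …, K-1` one has
`∂ξ_m/∂x_j(0) = 0` for every `j ≥ m+2`, and
`∂ξ_m/∂x_{m+1}(0) = − ξ_K(0)·(∂λ^{(m)}/∂x_{m+1}(0)) / (∂λ^{(m-1)}/∂x_m(0))`.
All indices are 1-based, matching the paper. -/
theorem derivative_induction_at_Ak_point
    (n K : ℕ) (hn : 1 ≤ n) (hK1 : 1 ≤ K) (hKn : K ≤ n)
    (U : Set (Fin n → ℝ)) (hU : IsOpen U) (h0U : (0 : Fin n → ℝ) ∈ U)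
    (lam : (Fin n → ℝ) → ℝ) (ξ : ℕ → (Fin n → ℝ) → ℝ)
    (hlam : ContDiffOn ℝ (⊤ : ℕ∞) lam U)
    (hξ : ∀ i, 1 ≤ i → i ≤ n → ContDiffOn ℝ (⊤ : ℕ∞) (ξ i) U)
    -- (H1) λ^{(m)}(0) = 0 for 0 ≤ m ≤ K-1
    (H1 : ∀ m, m < K → itd n K m lam 0 = 0)
    -- (H2) ∂λ^{(m-1)}/∂x_j(0) = 0 for 1 ≤ m ≤ K and m+1 ≤ j ≤ n
    (H2 : ∀ m, 1 ≤ m → m ≤ K → ∀ j, m + 1 ≤ j → j ≤ n →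
      pd n j (itd n K (m - 1) lam) 0 = 0)
    -- (H3) ∂λ^{(m-1)}/∂x_m(0) ≠ 0 for 1 ≤ m ≤ K
    (H3 : ∀ m, 1 ≤ m → m ≤ K → pd n m (itd n K (m - 1) lam) 0 ≠ 0)
    -- (H4) ξ_i(0) = 0 for i ≠ K, and ξ_K(0) ≠ 0
    (H4a : ∀ i, 1 ≤ i → i ≤ n → i ≠ K → ξ i 0 = 0)
    (H4b : ξ K 0 ≠ 0)
    -- (H5) Σ_i ξ_i ∂λ^{(m-1)}/∂x_i vanishes on S_m for 1 ≤ m ≤ K-1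
    (H5 : ∀ m, 1 ≤ m → m < K → ∀ x ∈ U, (∀ i, i < m → itd n K i lam x = 0) →
      (∑ i ∈ Finset.Icc 1 n, ξ i x * pd n i (itd n K (m - 1) lam) x) = 0) :
    ∀ m, 1 ≤ m → m ≤ K - 1 →
      (∀ j, m + 2 ≤ j → j ≤ n → pd n j (ξ m) 0 = 0) ∧
      pd n (m + 1) (ξ m) 0 =
        - (ξ K 0 * pd n (m + 1) (itd n K m lam) 0 / pd n m (itd n K (m - 1) lam) 0) := by
  have hlam' : ContDiffOn ℝ ∞ lam U := hlam.of_le (by simp)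
  have hξ' : ∀ i, 1 ≤ i → i ≤ n → ContDiffOn ℝ ∞ (ξ i) U :=
    fun i h1 h2 => (hξ i h1 h2).of_le (by simp)
  intro m
  induction m using Nat.strong_induction_on with
  | _ m IH =>
    intro hm1 hmK1
    have hmK : m < K := by omega
    have master := fun j hj1 hjn =>
      DerivInduction.master n K hKn U hU h0U lam ξ hlam' hξ' H1 H2 H3 H4a H5
        m hm1 hmK j hj1 hjn
    have hzero : ∀ j, m + 2 ≤ j → j ≤ n → pd n j (ξ m) 0 = 0 := by
      intro j hj2 hjn
      have hM := master j (by omega) hjn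
      have hsum : (∑ i ∈ Finset.Ioc 0 m, pd n i (itd n K (m - 1) lam) 0 * pd n j (ξ i) 0)
          = pd n m (itd n K (m - 1) lam) 0 * pd n j (ξ m) 0 := by
        refine Finset.sum_eq_single_of_mem m (Finset.mem_Ioc.mpr ⟨by omega, le_rfl⟩) ?_
        intro i hi hne
        rcases Finset.mem_Ioc.mp hi with ⟨hi1, him⟩
        have hilt : i < m := by omega
        have : pd n j (ξ i) 0 = 0 :=
          (IH i hilt (by omega) (by omega)).1 j (by omega) hjn
        rw [this, mul_zero]
      have hlast : pd n j (itd n K m lam) 0 = 0 := by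
        have := H2 (m + 1) (by omega) (by omega) j (by omega) hjn
        simpa using this
      rw [hsum, hlast, mul_zero, add_zero] at hM
      exact (mul_eq_zero.mp hM).resolve_left (H3 m hm1 (by omega))
    refine ⟨hzero, ?_⟩
    have hM := master (m + 1) le_rfl (by omega)
    have hsum : (∑ i ∈ Finset.Ioc 0 m,
          pd n i (itd n K (m - 1) lam) 0 * pd n (m + 1) (ξ i) 0)
        = pd n m (itd n K (m - 1) lam) 0 * pd n (m + 1) (ξ m) 0 := by
      refine Finset.sum_eq_single_of_mem m (Finset.mem_Ioc.mpr ⟨by omega, le_rfl⟩) ?_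
      intro i hi hne
      rcases Finset.mem_Ioc.mp hi with ⟨hi1, him⟩
      have hilt : i < m := by omega
      have : pd n (m + 1) (ξ i) 0 = 0 :=
        (IH i hilt (by omega) (by omega)).1 (m + 1) (by omega) (by omega)
      rw [this, mul_zero]
    rw [hsum] at hM
    have hc := H3 m hm1 (by omega)
    field_simp
    linarith [hM]
end

section
/- Let U ⊆ ℝ² be an open neighborhood of 0 and let λ, ξ₁, ξ₂ : U → ℝ be C^∞ functions satisfying: λ(0) = 0, ∂λ/∂x₂(0) = 0, ∂λ/∂x₁(0) ≠ 0, ξ₁(0) = 0, and the function ξ₁·(∂λ/∂x₁) + ξ₂·(∂λ/∂x₂) vanishes identically on {x ∈ U : λ(x) = 0}. Define Y : U → ℝ² by Y = (ξ₁, λ·ξ₂). Then the Jacobian determinant of Y at 0 equals ξ₂(0)² · (∂²λ/∂x₂²(0)). Consequently, if in addition ξ₂(0) ≠ 0 and ∂²λ/∂x₂²(0) ≠ 0, then 0 is a nondegenerate zero of Y and the sign of its Jacobian determinant (the Poincaré–Hopf index of Y at 0) equals the sign of ∂²λ/∂x₂²(0). -/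
/-- local computation in the proof of Proposition 4.4, the
`A₃`-point case in dimension two: if `λ(0) = 0`, `∂λ/∂x₂(0) = 0`,
`∂λ/∂x₁(0) ≠ 0`, `ξ₁(0) = 0`, and `ξ₁·∂λ/∂x₁ + ξ₂·∂λ/∂x₂` vanishes on
`{λ = 0} ∩ U`, then the Jacobian determinant of `Y = (ξ₁, λ·ξ₂)` at `0` equals
`ξ₂(0)² · ∂²λ/∂x₂²(0)`; consequently if moreover `ξ₂(0) ≠ 0` and
`∂²λ/∂x₂²(0) ≠ 0`, then `0` is a nondegenerate zero of `Y` and the sign of the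
Jacobian determinant equals the sign of `∂²λ/∂x₂²(0)`. -/
theorem jacobian_at_A3_point_dim2
    (U : Set (ℝ × ℝ)) (hU : IsOpen U) (h0U : (0, 0) ∈ U)
    (lam ξ₁ ξ₂ : ℝ × ℝ → ℝ)
    (hlam : ContDiffOn ℝ (⊤ : ℕ∞) lam U)
    (hξ₁ : ContDiffOn ℝ (⊤ : ℕ∞) ξ₁ U)
    (hξ₂ : ContDiffOn ℝ (⊤ : ℕ∞) ξ₂ U)
    (hlam0 : lam (0, 0) = 0)
    (hlamx2 : fderiv ℝ lam (0, 0) (0, 1) = 0)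
    (hlamx1 : fderiv ℝ lam (0, 0) (1, 0) ≠ 0)
    (hξ₁0 : ξ₁ (0, 0) = 0)
    (htang : ∀ x ∈ U, lam x = 0 →
      ξ₁ x * fderiv ℝ lam x (1, 0) + ξ₂ x * fderiv ℝ lam x (0, 1) = 0) :
    let Y₁ : ℝ × ℝ → ℝ := ξ₁
    let Y₂ : ℝ × ℝ → ℝ := fun x => lam x * ξ₂ x
    -- Jacobian determinant of Y = (Y₁, Y₂) at 0
    let J : ℝ := fderiv ℝ Y₁ (0, 0) (1, 0) * fderiv ℝ Y₂ (0, 0) (0, 1) -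
      fderiv ℝ Y₁ (0, 0) (0, 1) * fderiv ℝ Y₂ (0, 0) (1, 0)
    -- the second derivative ∂²λ/∂x₂²(0)
    let lam22 : ℝ := fderiv ℝ (fun x => fderiv ℝ lam x (0, 1)) (0, 0) (0, 1)
    J = ξ₂ (0, 0) ^ 2 * lam22 ∧
    (ξ₂ (0, 0) ≠ 0 → lam22 ≠ 0 → J ≠ 0 ∧ Real.sign J = Real.sign lam22) := by
  intro Y₁ Y₂ J lam22
  have hUnhds : U ∈ nhds ((0:ℝ), (0:ℝ)) := hU.mem_nhds h0U
  have hlamAt : ContDiffAt ℝ (⊤ : ℕ∞) lam (0, 0) := hlam.contDiffAt hUnhds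
  have hξ₁At : ContDiffAt ℝ (⊤ : ℕ∞) ξ₁ (0, 0) := hξ₁.contDiffAt hUnhds
  have hξ₂At : ContDiffAt ℝ (⊤ : ℕ∞) ξ₂ (0, 0) := hξ₂.contDiffAt hUnhds
  have hlamD : DifferentiableAt ℝ lam (0, 0) := hlamAt.differentiableAt (by simp)
  have hξ₁D : DifferentiableAt ℝ ξ₁ (0, 0) := hξ₁At.differentiableAt (by simp)
  have hξ₂D : DifferentiableAt ℝ ξ₂ (0, 0) := hξ₂At.differentiableAt (by simp)
  set a : ℝ := fderiv ℝ lam (0, 0) (1, 0) with ha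
  -- linearity of the derivative of lam at 0
  have hlin : ∀ v : ℝ × ℝ, fderiv ℝ lam (0, 0) v = v.1 * a := by
    intro v
    have hv : v = v.1 • ((1:ℝ), (0:ℝ)) + v.2 • ((0:ℝ), (1:ℝ)) := by
      ext <;> simp
    rw [hv, map_add, map_smul, map_smul, hlamx2]
    simp [ha, mul_comm]
  -- the map Φ and its derivative as a linear equivalence
  set L : (ℝ × ℝ) →L[ℝ] (ℝ × ℝ) :=
    (fderiv ℝ lam (0, 0)).prod (ContinuousLinearMap.snd ℝ ℝ ℝ) with hL
  set Linv : (ℝ × ℝ) →L[ℝ] (ℝ × ℝ) :=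
    (a⁻¹ • ContinuousLinearMap.fst ℝ ℝ ℝ).prod (ContinuousLinearMap.snd ℝ ℝ ℝ) with hLinv
  have hLapp : ∀ v : ℝ × ℝ, L v = (v.1 * a, v.2) := by
    intro v
    exact Prod.ext_iff.mpr ⟨hlin v, rfl⟩
  have hLinvapp : ∀ w : ℝ × ℝ, Linv w = (a⁻¹ * w.1, w.2) := fun w => rfl
  have hleft : Function.LeftInverse Linv L := by
    intro v
    rw [hLapp, hLinvapp]
    refine Prod.ext_iff.mpr ⟨?_, rfl⟩
    field_simp
  have hright : Function.RightInverse Linv L := by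
    intro w
    rw [hLinvapp, hLapp]
    refine Prod.ext_iff.mpr ⟨?_, rfl⟩
    simp only
    field_simp
  set A : (ℝ × ℝ) ≃L[ℝ] (ℝ × ℝ) := ContinuousLinearEquiv.equivOfInverse L Linv hleft hright
    with hA
  have hAcoe : (A : (ℝ × ℝ) →L[ℝ] (ℝ × ℝ)) = L := rfl
  set Φ : ℝ × ℝ → ℝ × ℝ := fun x => (lam x, x.2) with hΦdef
  have hΦ : HasStrictFDerivAt Φ (A : (ℝ × ℝ) →L[ℝ] (ℝ × ℝ)) (0, 0) := by
    rw [hAcoe, hL]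
    exact (hlamAt.hasStrictFDerivAt (by simp)).prodMk
      (ContinuousLinearMap.snd ℝ ℝ ℝ).hasStrictFDerivAt
  have hΦ0 : Φ (0, 0) = (0, 0) := by
    show (lam (0, 0), (0:ℝ)) = ((0:ℝ), (0:ℝ))
    rw [hlam0]
  set Ψ : ℝ × ℝ → ℝ × ℝ := hΦ.localInverse Φ A (0, 0) with hΨdef
  have hΨ0 : Ψ (0, 0) = (0, 0) := by
    have := hΦ.localInverse_apply_image
    rwa [hΦ0] at this
  have hΨstrict : HasStrictFDerivAt Ψ (A.symm : (ℝ × ℝ) →L[ℝ] (ℝ × ℝ)) (0, 0) := by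
    have := hΦ.to_localInverse
    rwa [hΦ0] at this
  -- the curve
  set c : ℝ → ℝ × ℝ := fun t => Ψ (0, t) with hcdef
  have hc0 : c 0 = (0, 0) := hΨ0
  have hinr : HasFDerivAt (fun t : ℝ => ((0 : ℝ), t))
      (ContinuousLinearMap.inr ℝ ℝ ℝ) 0 := (ContinuousLinearMap.inr ℝ ℝ ℝ).hasFDerivAt
  have hcD : HasFDerivAt c
      ((A.symm : (ℝ × ℝ) →L[ℝ] (ℝ × ℝ)).comp (ContinuousLinearMap.inr ℝ ℝ ℝ)) 0 := by
    have h1 : HasFDerivAt Ψ (A.symm : (ℝ × ℝ) →L[ℝ] (ℝ × ℝ)) ((0:ℝ), (0:ℝ)) :=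
      hΨstrict.hasFDerivAt
    exact h1.comp 0 hinr
  have hAsymm01 : A.symm ((0:ℝ), (1:ℝ)) = ((0:ℝ), (1:ℝ)) := by
    rw [A.symm_apply_eq]
    have : L ((0:ℝ), (1:ℝ)) = ((0:ℝ), (1:ℝ)) := by
      rw [hLapp]; norm_num
    exact this.symm
  -- eventually the curve stays in U and on {lam = 0}
  have hev1 : ∀ᶠ t in nhds (0:ℝ), Φ (c t) = ((0:ℝ), t) := by
    have hrt : ∀ᶠ y in nhds ((0:ℝ), (0:ℝ)), Φ (Ψ y) = y := by
      have := hΦ.eventually_right_inverse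
      rwa [hΦ0] at this
    have htend : Filter.Tendsto (fun t : ℝ => ((0:ℝ), t)) (nhds 0) (nhds ((0:ℝ), (0:ℝ))) := by
      have : Continuous (fun t : ℝ => ((0:ℝ), t)) := continuous_const.prodMk continuous_id
      simpa using this.tendsto 0
    exact htend.eventually hrt
  have hcont : ContinuousAt c 0 := hcD.continuousAt
  have hev2 : ∀ᶠ t in nhds (0:ℝ), c t ∈ U := by
    have : Filter.Tendsto c (nhds 0) (nhds ((0:ℝ), (0:ℝ))) := by rw [← hc0] at hUnhds ⊢; exact hcont
    exact this.eventually_mem hUnhds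
  -- the function h
  set D₁ : ℝ × ℝ → ℝ := fun x => fderiv ℝ lam x (1, 0) with hD₁def
  set D₂ : ℝ × ℝ → ℝ := fun x => fderiv ℝ lam x (0, 1) with hD₂def
  set h : ℝ × ℝ → ℝ := fun x => ξ₁ x * D₁ x + ξ₂ x * D₂ x with hhdef
  have hevh : (h ∘ c) =ᶠ[nhds (0:ℝ)] fun _ => (0:ℝ) := by
    filter_upwards [hev1, hev2] with t h1 h2
    have hlamc : lam (c t) = 0 := congrArg Prod.fst h1
    exact htang (c t) h2 hlamc
  -- differentiability of D₁, D₂ at 0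
  have hFcd : ContDiffOn ℝ (⊤ : ℕ∞) (fun x => fderiv ℝ lam x) U := by
    apply hlam.fderiv_of_isOpen hU
    exact (by simp)
  have hFD : DifferentiableAt ℝ (fun x => fderiv ℝ lam x) (0, 0) :=
    (hFcd.contDiffAt hUnhds).differentiableAt (by simp)
  have hD₁D : DifferentiableAt ℝ D₁ (0, 0) := hFD.clm_apply (differentiableAt_const _)
  have hD₂D : DifferentiableAt ℝ D₂ (0, 0) := hFD.clm_apply (differentiableAt_const _)
  have hD₂0 : D₂ (0, 0) = 0 := hlamx2
  have hD₁0 : D₁ (0, 0) = a := rfl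
  -- fderiv of h at 0 applied to (0,1)
  have hg₁D : DifferentiableAt ℝ (fun x => ξ₁ x * D₁ x) (0, 0) := hξ₁D.mul hD₁D
  have hg₂D : DifferentiableAt ℝ (fun x => ξ₂ x * D₂ x) (0, 0) := hξ₂D.mul hD₂D
  have hhD : DifferentiableAt ℝ h (0, 0) := hg₁D.add hg₂D
  have hfh : fderiv ℝ h (0, 0) (0, 1) =
      fderiv ℝ ξ₁ (0, 0) (0, 1) * a + ξ₂ (0, 0) * lam22 := by
    rw [hhdef]
    rw [fderiv_fun_add hg₁D hg₂D]
    simp only [ContinuousLinearMap.add_apply]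
    rw [fderiv_fun_mul hξ₁D hD₁D, fderiv_fun_mul hξ₂D hD₂D]
    simp only [ContinuousLinearMap.add_apply, ContinuousLinearMap.smul_apply, smul_eq_mul,
      hξ₁0, hD₂0, hD₁0]
    have : lam22 = fderiv ℝ D₂ (0, 0) (0, 1) := rfl
    rw [this]
    ring
  -- derivative of h ∘ c at 0 is zero
  have hhc : HasFDerivAt (h ∘ c)
      ((fderiv ℝ h (0, 0)).comp
        ((A.symm : (ℝ × ℝ) →L[ℝ] (ℝ × ℝ)).comp (ContinuousLinearMap.inr ℝ ℝ ℝ))) 0 := by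
    have h1 : HasFDerivAt h (fderiv ℝ h (0, 0)) (c 0) := by
      rw [hc0]; exact hhD.hasFDerivAt
    exact h1.comp 0 hcD
  have hzero : HasFDerivAt (fun _ : ℝ => (0:ℝ))
      ((fderiv ℝ h (0, 0)).comp
        ((A.symm : (ℝ × ℝ) →L[ℝ] (ℝ × ℝ)).comp (ContinuousLinearMap.inr ℝ ℝ ℝ))) 0 :=
    (hevh.hasFDerivAt_iff).mp hhc
  have hDzero : ((fderiv ℝ h (0, 0)).comp
      ((A.symm : (ℝ × ℝ) →L[ℝ] (ℝ × ℝ)).comp (ContinuousLinearMap.inr ℝ ℝ ℝ))) =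
      (0 : ℝ →L[ℝ] ℝ) :=
    hzero.unique (hasFDerivAt_const 0 0)
  have hkey : fderiv ℝ ξ₁ (0, 0) (0, 1) * a + ξ₂ (0, 0) * lam22 = 0 := by
    have := congrArg (fun (T : ℝ →L[ℝ] ℝ) => T 1) hDzero
    simp only [ContinuousLinearMap.comp_apply, ContinuousLinearMap.inr_apply,
      ContinuousLinearMap.zero_apply] at this
    rw [show ((A.symm : (ℝ × ℝ) →L[ℝ] (ℝ × ℝ)) ((0:ℝ), (1:ℝ))) = ((0:ℝ), (1:ℝ)) from hAsymm01]
      at this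
    rw [hfh] at this
    exact this
  -- fderiv of Y₂ at 0
  have hY₂ : ∀ v : ℝ × ℝ, fderiv ℝ Y₂ (0, 0) v = fderiv ℝ lam (0, 0) v * ξ₂ (0, 0) := by
    intro v
    show fderiv ℝ (fun x => lam x * ξ₂ x) (0, 0) v = _
    rw [fderiv_fun_mul hlamD hξ₂D]
    simp only [ContinuousLinearMap.add_apply, ContinuousLinearMap.smul_apply, smul_eq_mul,
      hlam0]
    ring
  have hJ : J = ξ₂ (0, 0) ^ 2 * lam22 := by
    have e1 : fderiv ℝ Y₂ (0, 0) (0, 1) = 0 := by rw [hY₂, hlamx2]; ring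
    have e2 : fderiv ℝ Y₂ (0, 0) (1, 0) = a * ξ₂ (0, 0) := by rw [hY₂]
    show fderiv ℝ ξ₁ (0, 0) (1, 0) * fderiv ℝ Y₂ (0, 0) (0, 1) -
      fderiv ℝ ξ₁ (0, 0) (0, 1) * fderiv ℝ Y₂ (0, 0) (1, 0) = _
    rw [e1, e2]
    linear_combination (-(ξ₂ (0, 0))) * hkey
  refine ⟨hJ, fun hξ hl => ?_⟩
  constructor
  · rw [hJ]; exact mul_ne_zero (pow_ne_zero 2 hξ) hl
  · have hsq : (0:ℝ) < ξ₂ (0, 0) ^ 2 := by positivity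
    rcases hl.lt_or_gt with hneg | hpos
    · rw [hJ, Real.sign_of_neg (mul_neg_of_pos_of_neg hsq hneg), Real.sign_of_neg hneg]
    · rw [hJ, Real.sign_of_pos (mul_pos hsq hpos), Real.sign_of_pos hpos]
end
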